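/- arXiv:1312.6767 — 2 statements merged into one kernel-verified Lean document; each statement's English description precedes it below -/
import Mathlib

section
/- Let K be a field of characteristic different from 2, let c ∈ K, and define f: K → K by f(x) = x² + c. Let o ≥ 2 be an integer and suppose that f^{o+1}(0) = f²(0) while the elements f(0), f²(0), ..., f^o(0) are pairwise distinct (i.e. f has orbit size o and tail size 1). Then f^o(0) = −c and (f^{o−1}(0))² = −2c. -/
/-- Let `K` be a field of characteristic different from 2 and `f(x) = x² + c`.
If `f` has orbit size `o ≥ 2` and tail size 1 (i.e. `f^(o+1)(0) = f²(0)` while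
`f(0), …, f^o(0)` are pairwise distinct), then `f^o(0) = −c` and
`(f^(o−1)(0))² = −2c`. -/
theorem stmt_14 (K : Type*) [Field K] (hchar : ringChar K ≠ 2) (c : K)
    (o : ℕ) (ho : 2 ≤ o)
    (hret : (fun x : K => x ^ 2 + c)^[o + 1] 0 = (fun x : K => x ^ 2 + c)^[2] 0)
    (hdist : ∀ j k : ℕ, 1 ≤ j → j < k → k ≤ o →
      (fun x : K => x ^ 2 + c)^[j] 0 ≠ (fun x : K => x ^ 2 + c)^[k] 0) :
    (fun x : K => x ^ 2 + c)^[o] 0 = -c ∧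
    ((fun x : K => x ^ 2 + c)^[o - 1] 0) ^ 2 = -(2 * c) := by
  set f : K → K := fun x => x ^ 2 + c with hf
  have h1 : f^[1] 0 = c := by simp [hf]
  have ho1 : f^[o + 1] 0 = (f^[o] 0) ^ 2 + c := by
    rw [Function.iterate_succ_apply']
  have h2 : f^[2] 0 = c ^ 2 + c := by
    rw [show (2:ℕ) = 1 + 1 from rfl, Function.iterate_succ_apply', h1]
  have hsq : (f^[o] 0) ^ 2 = c ^ 2 := by
    have := hret
    rw [ho1, h2] at this
    linear_combination this
  have hfo : f^[o] 0 = -c := by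
    have hz : (f^[o] 0 - c) * (f^[o] 0 + c) = 0 := by linear_combination hsq
    rcases mul_eq_zero.mp hz with h | h
    · exfalso
      exact hdist 1 o le_rfl (by omega) le_rfl (by rw [h1]; linear_combination -h)
    · linear_combination h
  constructor
  · exact hfo
  · have : f^[o] 0 = (f^[o - 1] 0) ^ 2 + c := by
      conv_lhs => rw [show o = (o - 1) + 1 by omega, Function.iterate_succ_apply']
    rw [hfo] at this
    linear_combination -this
end

section
/- Let K be a field of characteristic different from 2, and let a, b, c, p, q, r, s, α ∈ K with p ≠ 0 and α² = −2c. Define g(X) = X⁴ + aX² + b and h(X) = X⁴ + pX³ + qX² + rX + s, and suppose that the polynomial identity g(X² + c) = h(X)·h(−X) holds in K[X]. Then h(α) = (−2c + r/p + pα/2)²; in particular, h(α) is a square in K. -/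
open Polynomial in
/-- Example 6.2 of the paper: let `K` be a field of characteristic ≠ 2, `p ≠ 0`,
`α² = −2c`, `g(X) = X⁴ + aX² + b`, `h(X) = X⁴ + pX³ + qX² + rX + s`, and suppose
`g(X² + c) = h(X)·h(−X)` in `K[X]`.  Then `h(α) = (−2c + r/p + pα/2)²`; in
particular `h(α)` is a square in `K`. -/
theorem stmt_15 (K : Type*) [Field K] (hchar : ringChar K ≠ 2)
    (a b c p q r s α : K) (hp : p ≠ 0) (hα : α ^ 2 = -(2 * c))
    (hfac : (X ^ 4 + C a * X ^ 2 + C b).comp (X ^ 2 + C c) =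
      (X ^ 4 + C p * X ^ 3 + C q * X ^ 2 + C r * X + C s) *
        (X ^ 4 + C p * X ^ 3 + C q * X ^ 2 + C r * X + C s).comp (-X : K[X])) :
    (X ^ 4 + C p * X ^ 3 + C q * X ^ 2 + C r * X + C s).eval α
        = (-(2 * c) + r / p + p * α / 2) ^ 2 ∧
      IsSquare ((X ^ 4 + C p * X ^ 3 + C q * X ^ 2 + C r * X + C s).eval α) := by
  have h2K : (2 : K) ≠ 0 := Ring.two_ne_zero hchar
  have h6 := congrArg (fun f => Polynomial.coeff f 6) hfac
  have h4 := congrArg (fun f => Polynomial.coeff f 4) hfac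
  have h2 := congrArg (fun f => Polynomial.coeff f 2) hfac
  simp only [add_comp, mul_comp, pow_comp, X_comp, C_comp, neg_comp] at h6 h4 h2
  ring_nf at h6 h4 h2
  simp [mul_assoc, coeff_X_pow_mul', coeff_C_mul, coeff_mul_C, coeff_C] at h6 h4 h2
  simp only [← C_pow, coeff_C] at h6 h4 h2
  norm_num at h6 h4 h2
  have E1 : 2*q - 4*c - p^2 = 0 := by linear_combination -h6
  have E2 : q^2 + 2*s - 2*p*r - 6*c^2 - a = 0 := by linear_combination -h4
  have E3 : 2*q*s - r^2 - 4*c^3 - 2*a*c = 0 := by linear_combination -h2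
  have hs2 : 2*s*p^2 = 2*(r - 2*c*p)^2 + c*p^4 := by
    linear_combination 2*E3 - 4*c*E2 + (c*(2*q + 4*c + p^2) - 2*s)*E1
  have key : (α ^ 4 + p * α ^ 3 + q * α ^ 2 + r * α + s) * (4 * p^2)
      = (-(4*c*p) + 2*r + p^2*α)^2 := by
    linear_combination (4*p^2*(α^2 - 2*c) + 4*p^3*α + 4*p^2*q - p^4) * hα
      + (-(4:K)*c*p^2) * E1 + 2 * hs2
  have h4p : (4 : K) * p ^ 2 ≠ 0 := by
    refine mul_ne_zero ?_ (pow_ne_zero _ hp)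
    have : (4 : K) = 2 * 2 := by norm_num
    rw [this]; exact mul_ne_zero h2K h2K
  have main : (X ^ 4 + C p * X ^ 3 + C q * X ^ 2 + C r * X + C s).eval α
      = (-(2 * c) + r / p + p * α / 2) ^ 2 := by
    simp only [eval_add, eval_mul, eval_pow, eval_C, eval_X]
    apply mul_right_cancel₀ h4p
    rw [key]
    field_simp
    ring
  exact ⟨main, ⟨-(2 * c) + r / p + p * α / 2, by rw [main]; ring⟩⟩
end
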